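/- arXiv:1311.5905 — 2 statements merged into one kernel-verified Lean document; each statement's English description precedes it below -/
import Mathlib

section
/- Let 0 < β ≤ 1/2 and n ≥ 1. Fix a unit vector x' ∈ ℝⁿ. Then the function g₁(z) = ∫₀^1 t^{1+2β} (|z|²+t²)^{-(n+2+β)/2} |x'-z| (|x'-z|²+t²)^{-(n+2+β)/2} dt is integrable over ℝⁿ. -/
/-!
Split according to whether `z` is nearer to `0` or to `x'`. Since `‖x'‖ = 1`, the larger of `‖z‖`,
`‖x' - z‖` is at least a third of `1 +` the smaller one, so the factor of the farther point decays
like `(1 + ·) ^ (-(n + 2 + β))`, while the factor of the nearer point is at most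
`‖·‖ ^ (-(n - β/2)) * t ^ (-(2 + 3β/2))`. This dominates the `t`-integrand by `t ^ (β/2 - 1)`,
integrable on `(0, 1)`, times `k ‖z‖ + k ‖x' - z‖` with `k u = u ^ (-(n - β/2)) * (1 + u) ^ (-(n + 1 + β))`;
`k` is integrable on `ℝⁿ`, near the origin because `n - β/2 < n`, at infinity because `n + 1 + β > n`.
-/

open Real MeasureTheory Set Metric Module

noncomputable def radialKernel (s d u : ℝ) : ℝ := u ^ (-s) * (1 + u) ^ (-d)

section Kernel

variable {E : Type*} [NormedAddCommGroup E] [NormedSpace ℝ E] [FiniteDimensional ℝ E]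
  [MeasurableSpace E] [BorelSpace E] (μ : Measure E) [μ.IsAddHaarMeasure]

theorem integrable_radialKernel (hE : 1 ≤ finrank ℝ E) {s d : ℝ} (hs0 : 0 ≤ s)
    (hs : s < finrank ℝ E) (hd : finrank ℝ E < d) :
    Integrable (fun z : E => radialKernel s d ‖z‖) μ := by
  have hd0 : 0 ≤ d := (Nat.cast_nonneg _).trans hd.le
  have hmeas : AEStronglyMeasurable (fun z : E => radialKernel s d ‖z‖) μ := by
    unfold radialKernel; fun_prop
  have hnonneg (z : E) : 0 ≤ radialKernel s d ‖z‖ := by unfold radialKernel; positivity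
  rw [← integrableOn_univ, ← union_compl_self (ball (0 : E) 1)]
  refine .union
    (integrableOn_ball_of_norm_le_rpow (C := 1) hE hs (.of_forall fun z => ?_) hmeas) ?_
  · rw [norm_of_nonneg (hnonneg z), one_mul]
    exact mul_le_of_le_one_right (by positivity)
      (rpow_le_one_of_one_le_of_nonpos (by simp) (by linarith))
  · refine (integrable_one_add_norm hd).integrableOn.mono' hmeas.restrict ?_
    filter_upwards [ae_restrict_mem measurableSet_ball.compl] with z hz
    have hz1 : 1 ≤ ‖z‖ := by simpa using hz
    rw [norm_of_nonneg (hnonneg z)]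
    exact mul_le_of_le_one_left (by positivity)
      (rpow_le_one_of_one_le_of_nonpos hz1 (by linarith))

end Kernel

theorem rpow_sq_add_sq_le {x t s r : ℝ} (hx : 0 < x) (ht : 0 < t) (hs : 0 ≤ s) (hr : 0 ≤ r) :
    (x ^ 2 + t ^ 2) ^ (-(s + r) / 2) ≤ x ^ (-s) * t ^ (-r) := by
  have hsq (y e : ℝ) (hy : 0 < y) : y ^ (-e) = (y ^ 2) ^ (-e / 2) := by
    rw [← rpow_two, ← rpow_mul hy.le]; ring_nf
  rw [hsq x s hx, hsq t r ht, neg_add, add_div, rpow_add (by positivity)]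
  have hxt : 0 < x ^ 2 + t ^ 2 := by positivity
  exact mul_le_mul
    (rpow_le_rpow_of_nonpos (by positivity) (by nlinarith) (by linarith))
    (rpow_le_rpow_of_nonpos (by positivity) (by nlinarith) (by linarith))
    (by positivity) (by positivity)

theorem rpow_neg_le_of_one_add_le {u v s : ℝ} (hu : 0 ≤ u) (hv : 1 + u ≤ 3 * v) (hs : 0 ≤ s) :
    v ^ (-s) ≤ 3 ^ s * (1 + u) ^ (-s) := by
  calc v ^ (-s) ≤ ((1 + u) / 3) ^ (-s) :=
        rpow_le_rpow_of_nonpos (by positivity) (by linarith) (by linarith)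
    _ = 3 ^ s * (1 + u) ^ (-s) := by
      rw [div_rpow (by positivity) (by norm_num), rpow_neg (by norm_num : (0:ℝ) ≤ 3)]
      field_simp

theorem one_add_mul_radialKernel {s d u : ℝ} (hu : 0 ≤ u) :
    (1 + u) * radialKernel s d u = radialKernel s (d - 1) u := by
  unfold radialKernel
  rw [show -(d - 1) = 1 + -d by ring, rpow_add (by positivity), rpow_one]
  ring

theorem rpow_mul_rpow_sq_add_sq_le_radialKernel {u v t q s r : ℝ} (hu : 0 < u) (huv : u ≤ v)
    (huv1 : 1 ≤ u + v) (ht : 0 < t) (hs : 0 ≤ s) (hr : 0 ≤ r) :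
    t ^ q * (u ^ 2 + t ^ 2) ^ (-(s + r) / 2) * (v ^ 2 + t ^ 2) ^ (-(s + r) / 2) ≤
      3 ^ (s + r) * radialKernel s (s + r) u * t ^ (q - r) := by
  have hv : 0 < v := hu.trans_le huv
  have hu_small : (u ^ 2 + t ^ 2) ^ (-(s + r) / 2) ≤ u ^ (-s) * t ^ (-r) :=
    rpow_sq_add_sq_le hu ht hs hr
  have hv_large : (v ^ 2 + t ^ 2) ^ (-(s + r) / 2) ≤ 3 ^ (s + r) * (1 + u) ^ (-(s + r)) := by
    have h := rpow_sq_add_sq_le (r := 0) hv ht (add_nonneg hs hr) le_rfl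
    rw [add_zero, neg_zero, rpow_zero, mul_one] at h
    exact h.trans (rpow_neg_le_of_one_add_le hu.le (by linarith) (by positivity))
  calc t ^ q * (u ^ 2 + t ^ 2) ^ (-(s + r) / 2) * (v ^ 2 + t ^ 2) ^ (-(s + r) / 2)
      ≤ t ^ q * (u ^ (-s) * t ^ (-r)) * (3 ^ (s + r) * (1 + u) ^ (-(s + r))) := by gcongr
    _ = 3 ^ (s + r) * radialKernel s (s + r) u * t ^ (q - r) := by
      rw [radialKernel, sub_eq_add_neg, rpow_add ht]
      ring

theorem rpow_mul_rpow_sq_add_sq_le_radialKernel_add {a b t q s r γ : ℝ} (ha : 0 < a) (hb : 0 < b)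
    (hab : 1 ≤ a + b) (hba : b ≤ 1 + a) (ht : 0 < t) (hs : 0 ≤ s) (hr : 0 ≤ r) (hγ : s + r = γ) :
    t ^ q * (a ^ 2 + t ^ 2) ^ (-γ / 2) * b * (b ^ 2 + t ^ 2) ^ (-γ / 2) ≤
      3 ^ γ * (radialKernel s (γ - 1) a + radialKernel s (γ - 1) b) * t ^ (q - r) := by
  subst hγ
  have hk (u : ℝ) (hu : 0 ≤ u) : 0 ≤ radialKernel s (s + r - 1) u := by
    unfold radialKernel; positivity
  -- `b` is absorbed by the factor `(1 + min a b) ^ (-(s + r))`, since `b ≤ 1 + min a b`.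
  have absorb (u v : ℝ) (hu : 0 < u) (huv : u ≤ v) (huv1 : 1 ≤ u + v) (hbu : b ≤ 1 + u) :
      b * (t ^ q * (u ^ 2 + t ^ 2) ^ (-(s + r) / 2) * (v ^ 2 + t ^ 2) ^ (-(s + r) / 2)) ≤
        3 ^ (s + r) * radialKernel s (s + r - 1) u * t ^ (q - r) := by
    calc _ ≤ (1 + u) * (3 ^ (s + r) * radialKernel s (s + r) u * t ^ (q - r)) :=
          mul_le_mul hbu (rpow_mul_rpow_sq_add_sq_le_radialKernel hu huv huv1 ht hs hr)
            (by positivity) (by positivity)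
      _ = _ := by rw [← one_add_mul_radialKernel hu.le]; ring
  rcases le_total a b with h | h
  · calc _ = b * (t ^ q * (a ^ 2 + t ^ 2) ^ (-(s + r) / 2) * (b ^ 2 + t ^ 2) ^ (-(s + r) / 2)) :=
          by ring
      _ ≤ 3 ^ (s + r) * radialKernel s (s + r - 1) a * t ^ (q - r) := absorb a b ha h hab hba
      _ ≤ _ := by gcongr; exact le_add_of_nonneg_right (hk b hb.le)
  · calc _ = b * (t ^ q * (b ^ 2 + t ^ 2) ^ (-(s + r) / 2) * (a ^ 2 + t ^ 2) ^ (-(s + r) / 2)) :=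
          by ring
      _ ≤ 3 ^ (s + r) * radialKernel s (s + r - 1) b * t ^ (q - r) :=
          absorb b a hb h (by linarith) (by linarith)
      _ ≤ _ := by gcongr; exact le_add_of_nonneg_left (hk a ha.le)

theorem norm_setIntegral_rpow_mul_rpow_sq_add_sq_le {a b q s r γ : ℝ} (ha : 0 < a) (hb : 0 < b)
    (hab : 1 ≤ a + b) (hba : b ≤ 1 + a) (hs : 0 ≤ s) (hr : 0 ≤ r) (hγ : s + r = γ)
    (hqr : -1 < q - r) :
    ‖∫ t in Ioo (0 : ℝ) 1, t ^ q * (a ^ 2 + t ^ 2) ^ (-γ / 2) * b * (b ^ 2 + t ^ 2) ^ (-γ / 2)‖ ≤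
      3 ^ γ * (radialKernel s (γ - 1) a + radialKernel s (γ - 1) b) *
        ∫ t in Ioo (0 : ℝ) 1, t ^ (q - r) := by
  rw [← integral_const_mul]
  refine norm_integral_le_of_norm_le
    (((intervalIntegral.integrableOn_Ioo_rpow_iff one_pos).2 hqr).const_mul _) ?_
  filter_upwards [ae_restrict_mem measurableSet_Ioo] with t ht
  rw [norm_of_nonneg (by have := ht.1; positivity)]
  exact rpow_mul_rpow_sq_add_sq_le_radialKernel_add ha hb hab hba ht.1 hs hr hγ

theorem stmt_13 (n : ℕ) (hn : 1 ≤ n) (β : ℝ) (hβ0 : 0 < β) (hβ : β ≤ 1 / 2)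
    (x' : EuclideanSpace ℝ (Fin n)) (hx' : ‖x'‖ = 1) :
    Integrable (fun z : EuclideanSpace ℝ (Fin n) =>
      ∫ t in Set.Ioo (0 : ℝ) 1,
        t ^ (1 + 2 * β) * (‖z‖ ^ 2 + t ^ 2) ^ (-((n : ℝ) + 2 + β) / 2) *
          ‖x' - z‖ * (‖x' - z‖ ^ 2 + t ^ 2) ^ (-((n : ℝ) + 2 + β) / 2)) := by
  have hn' : (1 : ℝ) ≤ n := by exact_mod_cast hn
  have hdim : finrank ℝ (EuclideanSpace ℝ (Fin n)) = n := finrank_euclideanSpace_fin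
  -- `n + 2 + β = s + r` with `s = n - β / 2` and `r = 2 + 3β / 2`.
  set k : ℝ → ℝ := radialKernel ((n : ℝ) - β / 2) ((n : ℝ) + 2 + β - 1)
  have hk : Integrable (fun z : EuclideanSpace ℝ (Fin n) => k ‖z‖) :=
    integrable_radialKernel _ (hdim.symm ▸ hn) (by linarith) (by rw [hdim]; linarith)
      (by rw [hdim]; linarith)
  have hdom : Integrable (fun z : EuclideanSpace ℝ (Fin n) =>
      3 ^ ((n : ℝ) + 2 + β) * (k ‖z‖ + k ‖x' - z‖) *
        ∫ t in Ioo (0 : ℝ) 1, t ^ (1 + 2 * β - (2 + 3 * β / 2))) :=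
    ((hk.add (hk.comp_sub_left x')).const_mul _).mul_const _
  refine hdom.mono' ?_ ?_
  · have hF : StronglyMeasurable (Function.uncurry fun (z : EuclideanSpace ℝ (Fin n)) (t : ℝ) =>
        t ^ (1 + 2 * β) * (‖z‖ ^ 2 + t ^ 2) ^ (-((n : ℝ) + 2 + β) / 2) *
          ‖x' - z‖ * (‖x' - z‖ ^ 2 + t ^ 2) ^ (-((n : ℝ) + 2 + β) / 2)) :=
      (by fun_prop : Measurable _).stronglyMeasurable
    exact hF.integral_prod_right'.aestronglyMeasurable
  have : Nontrivial (EuclideanSpace ℝ (Fin n)) :=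
    nontrivial_of_ne x' 0 (by rintro rfl; simp at hx')
  filter_upwards [Measure.ae_ne volume 0, Measure.ae_ne volume x'] with z hz0 hzx'
  refine norm_setIntegral_rpow_mul_rpow_sq_add_sq_le (norm_pos_iff.2 hz0)
    (norm_pos_iff.2 (sub_ne_zero.2 hzx'.symm)) ?_ ?_ (by linarith) (by linarith) (by ring)
    (by linarith)
  · simpa [hx'] using norm_le_norm_add_norm_sub' x' z
  · simpa [hx'] using norm_sub_le x' z
end

section
/- Let 0 < β and n ≥ 1. Fix a unit vector x' ∈ ℝⁿ. Then g₂(z) = ∫₁^∞ t^{1+2β} (|z|²+t²)^{-(n+2+β)/2} |x'-z| (|x'-z|²+t²)^{-(n+2+β)/2} dt defines a continuous function on ℝⁿ which is integrable over ℝⁿ. -/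
/-!
For `t ≥ 1` the integrand is at most `2^{n+1} (1 + |z|)^{-(n+1)} t^{-(n+1)}`. Integrating in `t`
gives `g₂(z) ≲ (1 + |z|)^{-(n+1)}`, which is integrable on `ℝⁿ`; dropping the factor
`(1 + |z|)^{-(n+1)} ≤ 1` leaves a majorant independent of `z`, so `g₂` is continuous by
dominated convergence.
-/

open Real MeasureTheory Set

lemma rpow_eq_sq_rpow_half {x : ℝ} (hx : 0 ≤ x) (e : ℝ) : x ^ e = (x ^ 2) ^ (e / 2) := by
  rw [← rpow_natCast, ← rpow_mul hx]
  congr 1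
  push_cast
  ring

lemma rpow_le_rpow_half_of_sq_le {x w e : ℝ} (hx : 0 ≤ x) (hxw : x ^ 2 ≤ w) (he : 0 ≤ e) :
    x ^ e ≤ w ^ (e / 2) := by
  rw [rpow_eq_sq_rpow_half hx]
  exact rpow_le_rpow (by positivity) hxw (by linarith)

lemma rpow_half_le_rpow_of_sq_le {x w e : ℝ} (hx : 0 < x) (hxw : x ^ 2 ≤ w) (he : e ≤ 0) :
    w ^ (e / 2) ≤ x ^ e := by
  rw [rpow_eq_sq_rpow_half hx.le]
  exact rpow_le_rpow_of_nonpos (by positivity) hxw (by linarith)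

/-- The integrand of `g₂` at `a = ‖z‖`, `c = ‖x' - z‖`. -/
noncomputable def g₂Kernel (n : ℕ) (β a c t : ℝ) : ℝ :=
  t ^ (1 + 2 * β) * (a ^ 2 + t ^ 2) ^ (-((n : ℝ) + 2 + β) / 2) * c *
    (c ^ 2 + t ^ 2) ^ (-((n : ℝ) + 2 + β) / 2)

namespace g₂Kernel

variable {n : ℕ} {β a c t : ℝ}

lemma nonneg (hc : 0 ≤ c) (ht : 0 ≤ t) : 0 ≤ g₂Kernel n β a c t := by
  unfold g₂Kernel
  positivity

/-- Split the exponent `n + 2 + β` of `a² + t²` as `(n + 1) + (1 + β)`: the first part is spent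
on `(1 + a) / 2 ≤ max a t`, the second on `t`; and `c ≤ (c² + t²)^{1/2}` absorbs the factor
`c`. -/
lemma le_rpow_mul_rpow (hβ : 0 ≤ β) (ha : 0 ≤ a) (hc : 0 ≤ c) (ht : 1 ≤ t) :
    g₂Kernel n β a c t ≤
      2 ^ ((n : ℝ) + 1) * (1 + a) ^ (-((n : ℝ) + 1)) * t ^ (-((n : ℝ) + 1)) := by
  have ht0 : 0 < t := by linarith
  set p : ℝ := (n : ℝ) + 2 + β
  set r : ℝ := (n : ℝ) + 1
  have hr : 0 ≤ r := by positivity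
  have ha_decay : (a ^ 2 + t ^ 2) ^ (-p / 2) ≤ ((1 + a) / 2) ^ (-r) * t ^ (-(1 + β)) :=
    calc (a ^ 2 + t ^ 2) ^ (-p / 2)
        = (a ^ 2 + t ^ 2) ^ (-r / 2) * (a ^ 2 + t ^ 2) ^ (-(1 + β) / 2) := by
          rw [← rpow_add (by positivity)]; congr 1; simp only [p, r]; ring
      _ ≤ ((1 + a) / 2) ^ (-r) * t ^ (-(1 + β)) := by
          gcongr
          · exact rpow_half_le_rpow_of_sq_le (by positivity)
              (by nlinarith [sq_nonneg (a - 1)]) (by linarith)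
          · exact rpow_half_le_rpow_of_sq_le ht0 (by nlinarith) (by linarith)
  have hc_decay : c * (c ^ 2 + t ^ 2) ^ (-p / 2) ≤ t ^ (1 - p) :=
    calc c * (c ^ 2 + t ^ 2) ^ (-p / 2)
        ≤ (c ^ 2 + t ^ 2) ^ ((1 : ℝ) / 2) * (c ^ 2 + t ^ 2) ^ (-p / 2) := by
          gcongr
          simpa using
            rpow_le_rpow_half_of_sq_le hc (le_add_of_nonneg_right (sq_nonneg t)) zero_le_one
      _ = (c ^ 2 + t ^ 2) ^ ((1 - p) / 2) := by
          rw [← rpow_add (by positivity)]; congr 1; ring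
      _ ≤ t ^ (1 - p) := rpow_half_le_rpow_of_sq_le ht0 (by nlinarith) (by linarith)
  calc g₂Kernel n β a c t
      = t ^ (1 + 2 * β) * (a ^ 2 + t ^ 2) ^ (-p / 2) * (c * (c ^ 2 + t ^ 2) ^ (-p / 2)) := by
        unfold g₂Kernel; ring
    _ ≤ t ^ (1 + 2 * β) * (((1 + a) / 2) ^ (-r) * t ^ (-(1 + β))) * t ^ (1 - p) := by
        gcongr
    _ = ((1 + a) / 2) ^ (-r) * (t ^ (1 + 2 * β) * t ^ (-(1 + β)) * t ^ (1 - p)) := by ring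
    _ = 2 ^ r * (1 + a) ^ (-r) * t ^ (-r) := by
        rw [← rpow_add ht0, ← rpow_add ht0, div_rpow (by positivity) zero_le_two,
          rpow_neg zero_le_two, div_inv_eq_mul]
        rw [show 1 + 2 * β + -(1 + β) + (1 - p) = -r by simp only [p, r]; ring]
        ring

lemma le_rpow (hβ : 0 ≤ β) (ha : 0 ≤ a) (hc : 0 ≤ c) (ht : 1 ≤ t) :
    g₂Kernel n β a c t ≤ 2 ^ ((n : ℝ) + 1) * t ^ (-((n : ℝ) + 1)) := by
  refine (le_rpow_mul_rpow hβ ha hc ht).trans ?_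
  have hdecay : (1 + a) ^ (-((n : ℝ) + 1)) ≤ 1 :=
    rpow_le_one_of_one_le_of_nonpos (by linarith) (by linarith)
  calc _ ≤ 2 ^ ((n : ℝ) + 1) * 1 * t ^ (-((n : ℝ) + 1)) := by gcongr
    _ = _ := by rw [mul_one]

@[fun_prop]
lemma measurable : Measurable (g₂Kernel n β a c) := by
  unfold g₂Kernel
  fun_prop

lemma continuous_of_pos (ht : 0 < t) :
    Continuous fun ac : ℝ × ℝ => g₂Kernel n β ac.1 ac.2 t := by
  have hbase (e : ℝ) (f : ℝ × ℝ → ℝ) (hf : Continuous f) :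
      Continuous fun ac => (f ac ^ 2 + t ^ 2) ^ e :=
    (by fun_prop : Continuous fun ac => f ac ^ 2 + t ^ 2).rpow_const fun _ => Or.inl (by positivity)
  unfold g₂Kernel
  exact ((continuous_const.mul (hbase _ _ continuous_fst)).mul continuous_snd).mul
    (hbase _ _ continuous_snd)

end g₂Kernel

section

variable {n : ℕ} {β : ℝ} {E : Type*} [NormedAddCommGroup E]

lemma integrableOn_Ioi_rpow_neg_nat_add_one (hn : 0 < n) :
    IntegrableOn (fun t : ℝ => t ^ (-((n : ℝ) + 1))) (Ioi 1) :=
  integrableOn_Ioi_rpow_of_lt (by linarith [(Nat.cast_pos.mpr hn : (0 : ℝ) < n)]) one_pos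

lemma integrableOn_Ioi_g₂Kernel (hn : 0 < n) (hβ : 0 ≤ β) {a c : ℝ} (ha : 0 ≤ a)
    (hc : 0 ≤ c) :
    IntegrableOn (g₂Kernel n β a c) (Ioi 1) := by
  refine ((integrableOn_Ioi_rpow_neg_nat_add_one hn).const_mul (2 ^ ((n : ℝ) + 1))).mono'
    g₂Kernel.measurable.aestronglyMeasurable ?_
  filter_upwards [ae_restrict_mem measurableSet_Ioi] with t ht
  rw [Real.norm_of_nonneg (g₂Kernel.nonneg hc (by linarith [mem_Ioi.mp ht]))]
  exact g₂Kernel.le_rpow hβ ha hc (le_of_lt ht)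

theorem continuous_setIntegral_g₂Kernel (hn : 0 < n) (hβ : 0 ≤ β) (x' : E) :
    Continuous fun z : E => ∫ t in Ioi 1, g₂Kernel n β ‖z‖ ‖x' - z‖ t := by
  refine continuous_of_dominated (fun _ => g₂Kernel.measurable.aestronglyMeasurable)
    (fun z => ?_) ((integrableOn_Ioi_rpow_neg_nat_add_one hn).const_mul (2 ^ ((n : ℝ) + 1))) ?_
  · filter_upwards [ae_restrict_mem measurableSet_Ioi] with t ht
    rw [Real.norm_of_nonneg (g₂Kernel.nonneg (norm_nonneg _) (by linarith [mem_Ioi.mp ht]))]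
    exact g₂Kernel.le_rpow hβ (norm_nonneg _) (norm_nonneg _) (le_of_lt ht)
  · filter_upwards [ae_restrict_mem measurableSet_Ioi] with t ht
    exact (g₂Kernel.continuous_of_pos (by linarith [mem_Ioi.mp ht])).comp
      (continuous_norm.prodMk (continuous_const.sub continuous_id).norm)

theorem integrable_setIntegral_g₂Kernel [NormedSpace ℝ E] [FiniteDimensional ℝ E]
    [MeasurableSpace E] [BorelSpace E] (μ : Measure E) [μ.IsAddHaarMeasure]
    (hE : Module.finrank ℝ E ≤ n) (hn : 0 < n) (hβ : 0 ≤ β) (x' : E) :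
    Integrable (fun z : E => ∫ t in Ioi 1, g₂Kernel n β ‖z‖ ‖x' - z‖ t) μ := by
  set C := 2 ^ ((n : ℝ) + 1) * ∫ t in Ioi (1 : ℝ), t ^ (-((n : ℝ) + 1))
  have hE' : (Module.finrank ℝ E : ℝ) < n + 1 := by
    linarith [(Nat.cast_le.mpr hE : (Module.finrank ℝ E : ℝ) ≤ n)]
  have hdecay : Integrable (fun z : E => C * (1 + ‖z‖) ^ (-((n : ℝ) + 1))) μ :=
    (integrable_one_add_norm hE').const_mul C
  refine hdecay.mono' (continuous_setIntegral_g₂Kernel hn hβ x').aestronglyMeasurable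
    (ae_of_all _ fun z => ?_)
  have hz := norm_nonneg z
  have hxz := norm_nonneg (x' - z)
  rw [Real.norm_of_nonneg (setIntegral_nonneg measurableSet_Ioi fun t ht =>
    g₂Kernel.nonneg hxz (by linarith [mem_Ioi.mp ht]))]
  calc ∫ t in Ioi 1, g₂Kernel n β ‖z‖ ‖x' - z‖ t
      ≤ ∫ t in Ioi 1,
          (2 ^ ((n : ℝ) + 1) * (1 + ‖z‖) ^ (-((n : ℝ) + 1))) * t ^ (-((n : ℝ) + 1)) :=
        setIntegral_mono_on (integrableOn_Ioi_g₂Kernel hn hβ hz hxz)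
          ((integrableOn_Ioi_rpow_neg_nat_add_one hn).const_mul _) measurableSet_Ioi
          fun t ht => g₂Kernel.le_rpow_mul_rpow hβ hz hxz (le_of_lt ht)
    _ = C * (1 + ‖z‖) ^ (-((n : ℝ) + 1)) := by rw [integral_const_mul]; ring

end

theorem stmt_14_general (n : ℕ) (hn : 1 ≤ n) (β : ℝ) (hβ0 : 0 < β)
    (x' : EuclideanSpace ℝ (Fin n)) :
    Continuous (fun z : EuclideanSpace ℝ (Fin n) =>
      ∫ t in Set.Ioi (1 : ℝ),
        t ^ (1 + 2 * β) * (‖z‖ ^ 2 + t ^ 2) ^ (-((n : ℝ) + 2 + β) / 2) *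
          ‖x' - z‖ * (‖x' - z‖ ^ 2 + t ^ 2) ^ (-((n : ℝ) + 2 + β) / 2)) ∧
    Integrable (fun z : EuclideanSpace ℝ (Fin n) =>
      ∫ t in Set.Ioi (1 : ℝ),
        t ^ (1 + 2 * β) * (‖z‖ ^ 2 + t ^ 2) ^ (-((n : ℝ) + 2 + β) / 2) *
          ‖x' - z‖ * (‖x' - z‖ ^ 2 + t ^ 2) ^ (-((n : ℝ) + 2 + β) / 2)) :=
  ⟨continuous_setIntegral_g₂Kernel hn hβ0.le x',
    integrable_setIntegral_g₂Kernel volume finrank_euclideanSpace_fin.le hn hβ0.le x'⟩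

theorem stmt_14 (n : ℕ) (hn : 1 ≤ n) (β : ℝ) (hβ0 : 0 < β)
    (x' : EuclideanSpace ℝ (Fin n)) (hx' : ‖x'‖ = 1) :
    Continuous (fun z : EuclideanSpace ℝ (Fin n) =>
      ∫ t in Set.Ioi (1 : ℝ),
        t ^ (1 + 2 * β) * (‖z‖ ^ 2 + t ^ 2) ^ (-((n : ℝ) + 2 + β) / 2) *
          ‖x' - z‖ * (‖x' - z‖ ^ 2 + t ^ 2) ^ (-((n : ℝ) + 2 + β) / 2)) ∧
    Integrable (fun z : EuclideanSpace ℝ (Fin n) =>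
      ∫ t in Set.Ioi (1 : ℝ),
        t ^ (1 + 2 * β) * (‖z‖ ^ 2 + t ^ 2) ^ (-((n : ℝ) + 2 + β) / 2) *
          ‖x' - z‖ * (‖x' - z‖ ^ 2 + t ^ 2) ^ (-((n : ℝ) + 2 + β) / 2)) :=
  stmt_14_general n hn β hβ0 x'
end
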